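/- Assume that the morphism is strong, i.e., the canonical map R ⊗_{R^G} S^G → S, r ⊗ s ↦ r·s, is bijective, and that S is finitely generated as an R-module. Then S^G is finitely generated as an R^G-module. -/

import Mathlib

open TensorProduct

/-- The subring of `G`-invariant elements of `R`. -/
def fixedSubring (G R : Type*) [Group G] [CommRing R] [MulSemiringAction G R] : Subring R where
  carrier := {r | ∀ g : G, g • r = r}
  mul_mem' := by intro a b ha hb g; rw [smul_mul', ha, hb]
  one_mem' := fun g => smul_one g
  add_mem' := by intro a b ha hb g; rw [smul_add, ha, hb]
  zero_mem' := fun g => smul_zero g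
  neg_mem' := by intro a ha g; rw [smul_neg, ha]

/-- An `R`-algebra `S` with `G`-actions on both `R` and `S` making the structure map
equivariant. -/
class EquivariantAlgebra (G R S : Type*) [Group G] [CommRing R] [CommRing S] [Algebra R S]
    [MulSemiringAction G R] [MulSemiringAction G S] : Prop where
  smul_algebraMap : ∀ (g : G) (r : R), g • (algebraMap R S r) = algebraMap R S (g • r)

variable (G R S : Type*) [Group G] [CommRing R] [CommRing S] [Algebra R S]
  [MulSemiringAction G R] [MulSemiringAction G S] [EquivariantAlgebra G R S]

/-- The restriction `R^G → S^G` of the structure map `R → S`. -/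
def invariantsMap : fixedSubring G R →+* fixedSubring G S where
  toFun a := ⟨algebraMap R S a,
    fun g => by rw [EquivariantAlgebra.smul_algebraMap g (a : R),
      show g • (a : R) = (a : R) from a.2 g]⟩
  map_one' := by ext; simp
  map_mul' := fun a b => by ext; simp
  map_zero' := by ext; simp
  map_add' := fun a b => by ext; simp

/-- `S^G` is an `R^G`-algebra via the restricted structure map. -/
noncomputable instance : Algebra (fixedSubring G R) (fixedSubring G S) :=
  (invariantsMap G R S).toAlgebra

/-- `S` is an `R^G`-algebra via `R^G → R → S`. -/
noncomputable instance instAlgebraFixedBase {G R S : Type*} [Group G] [CommRing R]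
    [CommRing S] [Algebra R S] [MulSemiringAction G R] [MulSemiringAction G S]
    [EquivariantAlgebra G R S] : Algebra (fixedSubring G R) S :=
  ((algebraMap R S).comp (fixedSubring G R).subtype).toAlgebra

/-- The canonical map `R ⊗_{R^G} S^G → S`, `r ⊗ s ↦ r·s`. The morphism
`Spec S → Spec R` is *strong* when this map is bijective. -/
noncomputable def strongMap :
    R ⊗[fixedSubring G R] (fixedSubring G S) →ₐ[fixedSubring G R] S :=
  Algebra.TensorProduct.productMap
    (R := fixedSubring G R) (A := R) (B := fixedSubring G S) (S := S)
    { algebraMap R S with commutes' := fun a => rfl }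
    { (fixedSubring G S).subtype with commutes' := fun a => rfl }

/-!
Averaging over `G` gives an `R^G`-linear retraction of `R^G → R`, so finiteness of `R`-modules
obtained by base change along `R^G → R` descends to `R^G`: if `m ∈ M` and `1 ⊗ m` is a
combination of tensors `r ⊗ mᵢ`, applying the retraction to the first factor writes `m` as an
`R^G`-combination of the `mᵢ`. Strongness identifies `S` with the base change `R ⊗_{R^G} S^G`.
-/

section Retraction

variable {A B M N : Type*} [CommSemiring A] [Semiring B] [Algebra A B]
  [AddCommMonoid M] [Module A M] [AddCommMonoid N] [Module A N]
  (ρ : B →ₗ[A] A) (hρ : ρ 1 = 1)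
include hρ

theorem LinearMap.surjective_of_lTensor_surjective_of_retraction (f : N →ₗ[A] M)
    (hf : Function.Surjective (f.lTensor B)) : Function.Surjective f := by
  intro m
  obtain ⟨x, hx⟩ := hf (1 ⊗ₜ m)
  refine ⟨TensorProduct.lid A N (ρ.rTensor N x), ?_⟩
  have naturality : ∀ y : B ⊗[A] N, f (TensorProduct.lid A N (ρ.rTensor N y)) =
      TensorProduct.lid A M (ρ.rTensor M (f.lTensor B y)) := fun y =>
    y.induction_on (by simp) (fun b n => by simp) (fun _ _ h₁ h₂ => by simp [h₁, h₂])
  simp [naturality, hx, hρ]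

theorem Module.Finite.of_finite_tensorProduct_of_retraction [Module.Finite B (B ⊗[A] M)] :
    Module.Finite A M := by
  obtain ⟨n, s, hs⟩ := Module.Finite.exists_fin (R := B) (M := B ⊗[A] M)
  choose k t m h using fun i => TensorProduct.exists_sum_tmul_eq (s i)
  set P := Submodule.span A (Set.range fun p : Σ i, Fin (k i) => m p.1 p.2)
  have hP : P = ⊤ := by
    rw [← Submodule.range_subtype P, LinearMap.range_eq_top]
    refine LinearMap.surjective_of_lTensor_surjective_of_retraction ρ hρ P.subtype ?_
    change Function.Surjective (TensorProduct.AlgebraTensorModule.lTensor B B P.subtype)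
    rw [← LinearMap.range_eq_top, eq_top_iff, ← hs, Submodule.span_le, Set.range_subset_iff]
    intro i
    rw [h i]
    exact Submodule.sum_mem _ fun j _ =>
      ⟨t i j ⊗ₜ ⟨m i j, Submodule.subset_span ⟨⟨i, j⟩, rfl⟩⟩, rfl⟩
  exact ⟨hP ▸ Submodule.fg_span (Set.finite_range _)⟩

end Retraction

theorem smul_invOf_of_smul_eq {M A : Type*} [Monoid M] [Semiring A] [MulSemiringAction M A]
    {g : M} {x : A} [Invertible x] (h : g • x = x) : g • ⅟x = ⅟x :=
  (invOf_eq_right_inv <| calc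
    x * g • ⅟x = g • x * g • ⅟x := by rw [h]
    _ = 1 := by rw [← smul_mul', mul_invOf_self, smul_one]).symm

section Reynolds

variable {G} [Fintype G]

theorem smul_sum_smul {M : Type*} [AddCommMonoid M] [DistribMulAction G M] (g : G) (m : M) :
    g • ∑ h : G, h • m = ∑ h : G, h • m := by
  simp only [Finset.smul_sum, smul_smul]
  exact Fintype.sum_equiv (Equiv.mulLeft g) _ _ fun _ => rfl

variable (G) [Invertible (Fintype.card G : R)]

theorem smul_invOf_card (g : G) : g • ⅟(Fintype.card G : R) = ⅟(Fintype.card G : R) :=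
  smul_invOf_of_smul_eq (map_natCast (MulSemiringAction.toRingHom G R g) _)

noncomputable def reynolds : R →ₗ[fixedSubring G R] fixedSubring G R where
  toFun r := ⟨⅟(Fintype.card G : R) * ∑ g : G, g • r, fun g => by
    rw [smul_mul', smul_invOf_card, smul_sum_smul]⟩
  map_add' r s := by ext; simp [smul_add, Finset.sum_add_distrib, mul_add]
  map_smul' a r := by
    have ha : ∀ g : G, g • (a : R) = a := a.2
    ext
    simp [Subring.smul_def, smul_mul', ha, Finset.mul_sum, mul_left_comm]

@[simp]
theorem coe_reynolds (r : R) :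
    (reynolds G R r : R) = ⅟(Fintype.card G : R) * ∑ g : G, g • r := rfl

theorem reynolds_one : reynolds G R 1 = 1 := by
  ext
  simp

end Reynolds

instance : IsScalarTower (fixedSubring G R) R S := .of_algebraMap_eq fun _ => rfl

instance : IsScalarTower (fixedSubring G R) (fixedSubring G S) S := .of_algebraMap_eq fun _ => rfl

noncomputable def strongAlgHom : R ⊗[fixedSubring G R] fixedSubring G S →ₐ[R] S :=
  Algebra.TensorProduct.productLeftAlgHom (Algebra.ofId R S)
    (IsScalarTower.toAlgHom (fixedSubring G R) (fixedSubring G S) S)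

theorem coe_strongAlgHom : ⇑(strongAlgHom G R S) = strongMap G R S := rfl

theorem finite_tensorProduct_invariants_of_bijective_strongMap
    (hstrong : Function.Bijective (strongMap G R S)) [Module.Finite R S] :
    Module.Finite R (R ⊗[fixedSubring G R] fixedSubring G S) :=
  .equiv (LinearEquiv.ofBijective (strongAlgHom G R S).toLinearMap
    (coe_strongAlgHom G R S ▸ hstrong)).symm

/-- If `Spec S → Spec R` is strong and `S` is a finite `R`-module, then `S^G` is a
finite `R^G`-module. -/
theorem invariants_finite_of_strong_of_finite
    {G : Type*} {R S : Type u} [Group G] [Fintype G] [CommRing R] [CommRing S] [Algebra R S]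
    [MulSemiringAction G R] [MulSemiringAction G S] [EquivariantAlgebra G R S]
    (hcard : Invertible (Fintype.card G : R))
    (hstrong : Function.Bijective (strongMap G R S))
    (hfin : Module.Finite R S) :
    Module.Finite (fixedSubring G R) (fixedSubring G S) := by
  have := finite_tensorProduct_invariants_of_bijective_strongMap G R S hstrong
  exact .of_finite_tensorProduct_of_retraction (reynolds G R) (reynolds_one G R)
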